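/- Let A ⊂ ℝⁿ be a compact uniformly convex set with modulus of convexity δ_A. Let r₀ = sup{r ≥ 0 : there exists a ∈ ℝⁿ with B_r(a) ⊆ A}, let a ∈ ℝⁿ be such that B_{r₀}(a) ⊆ A, and let d = sup_{x∈A} ‖x − a‖. If d > 2r₀, then δ_A(d − r₀) ≤ r₀/2; in other words, d ≤ max{2r₀, r₀ + δ_A⁻¹(r₀/2)}. -/

import Mathlib

open Set Metric Pointwise

/-- Supporting function `s(p, A) = sup_{x ∈ A} ⟪p, x⟫`. -/
noncomputable def suppF {n : ℕ} (p : EuclideanSpace ℝ (Fin n))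
    (A : Set (EuclideanSpace ℝ (Fin n))) : ℝ :=
  sSup ((fun x => (inner ℝ p x : ℝ)) '' A)

/-- Modulus of convexity of a set `A`. -/
noncomputable def modConv {n : ℕ} (A : Set (EuclideanSpace ℝ (Fin n))) (ε : ℝ) : ℝ :=
  sSup {δ : ℝ | 0 ≤ δ ∧ ∀ x₁ ∈ A, ∀ x₂ ∈ A, ‖x₁ - x₂‖ = ε →
    Metric.closedBall (midpoint ℝ x₁ x₂) δ ⊆ A}

/-- `A` is uniformly convex: its modulus of convexity is positive on `(0, diam A)`. -/
def UnifConvex {n : ℕ} (A : Set (EuclideanSpace ℝ (Fin n))) : Prop :=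
  ∀ ε : ℝ, 0 < ε → ε < Metric.diam A → 0 < modConv A ε

/-- `C` is a grid with step `Δ`: a finite set of unit vectors such that every nonzero `p`
whose normalization is not in `C` is a positive combination of grid vectors that are
pairwise `Δ`-close. -/
def IsGrid {n : ℕ} (C : Finset (EuclideanSpace ℝ (Fin n))) (Δ : ℝ) : Prop :=
  (∀ p ∈ C, ‖p‖ = 1) ∧
  ∀ p : EuclideanSpace ℝ (Fin n), p ≠ 0 → ‖p‖⁻¹ • p ∉ C →
    ∃ (k : ℕ) (q : Fin k → EuclideanSpace ℝ (Fin n)) (α : Fin k → ℝ),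
      (∀ i, q i ∈ C) ∧ (∀ i, 0 < α i) ∧ p = ∑ i, α i • q i ∧
      ∀ i j, ‖q i - q j‖ < Δ

/-- External polyhedral approximation of `A` on the grid `C`. -/
def polyApprox {n : ℕ} (C : Finset (EuclideanSpace ℝ (Fin n)))
    (A : Set (EuclideanSpace ℝ (Fin n))) : Set (EuclideanSpace ℝ (Fin n)) :=
  {x | ∀ p ∈ C, (inner ℝ p x : ℝ) ≤ suppF p A}

/-- Geometric (Minkowski–Pontryagin) difference `B ⊖ A = {x | x + A ⊆ B}`. -/
def geomDiff {n : ℕ} (B A : Set (EuclideanSpace ℝ (Fin n))) :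
    Set (EuclideanSpace ℝ (Fin n)) :=
  {x | ∀ a ∈ A, x + a ∈ B}

open scoped RealInnerProductSpace

/-! The ball `B_{r₀}(a)` is maximal, so some hyperplane supporting `A` touches it at a point
`a + r₀ • ν` with `⟪ν, x⋆ - a⟫ ≥ 0`, where `x⋆` is a point of `A` farthest from `a`: otherwise the
ball could be pushed towards `x⋆` and enlarged. The chord of `A` of length `d - r₀` from the
contact point towards `x⋆` ends at distance at most `r₀` from that hyperplane, so its midpoint is
within `r₀ / 2` of it, and no larger ball around the midpoint fits in `A`. -/

lemma bddAbove_inscribed_radii {E : Type*} [NormedAddCommGroup E] [NormedSpace ℝ E]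
    [Nontrivial E] {A : Set E} (hA : Bornology.IsBounded A) :
    BddAbove {r : ℝ | 0 ≤ r ∧ ∃ c : E, closedBall c r ⊆ A} := by
  refine ⟨diam A, ?_⟩
  rintro r ⟨hr, c, hc⟩
  have := diam_mono hc hA
  rw [diam_closedBall_eq c hr] at this
  linarith

lemma add_smul_mem_closedBall {E : Type*} [SeminormedAddCommGroup E] [NormedSpace ℝ E] (a : E)
    {ν : E} (hν : ‖ν‖ = 1) {r : ℝ} (hr : 0 ≤ r) : a + r • ν ∈ closedBall a r := by
  rw [mem_closedBall, dist_eq_norm, add_sub_cancel_left, norm_smul, hν, mul_one,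
    Real.norm_of_nonneg hr]

lemma inner_add_smul_of_norm_eq_one {E : Type*} [NormedAddCommGroup E] [InnerProductSpace ℝ E]
    {ν : E} (hν : ‖ν‖ = 1) (a : E) (r : ℝ) : ⟪ν, a + r • ν⟫ = ⟪ν, a⟫ + r := by
  rw [inner_add_right, real_inner_smul_right, real_inner_self_eq_norm_sq, hν, one_pow, mul_one]

section SupportFunction

variable {n : ℕ} {A : Set (EuclideanSpace ℝ (Fin n))}

lemma inner_le_suppF (hA : Bornology.IsBounded A) (p : EuclideanSpace ℝ (Fin n))
    {x : EuclideanSpace ℝ (Fin n)} (hx : x ∈ A) : ⟪p, x⟫ ≤ suppF p A := by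
  obtain ⟨M, hM⟩ := hA.subset_closedBall 0
  refine le_csSup ⟨‖p‖ * M, ?_⟩ ⟨x, hx, rfl⟩
  rintro _ ⟨y, hy, rfl⟩
  calc ⟪p, y⟫ ≤ ‖p‖ * ‖y‖ := real_inner_le_norm p y
    _ ≤ ‖p‖ * M := by gcongr; exact mem_closedBall_zero_iff.mp (hM hy)

lemma suppF_le (hne : A.Nonempty) {p : EuclideanSpace ℝ (Fin n)} {β : ℝ}
    (h : ∀ x ∈ A, ⟪p, x⟫ ≤ β) : suppF p A ≤ β :=
  csSup_le (hne.image _) (by rintro _ ⟨x, hx, rfl⟩; exact h x hx)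

lemma continuous_suppF (hA : Bornology.IsBounded A) (hne : A.Nonempty) :
    Continuous fun p : EuclideanSpace ℝ (Fin n) => suppF p A := by
  obtain ⟨M, hM⟩ := hA.subset_closedBall 0
  refine (LipschitzWith.of_le_add_mul M.toNNReal fun p q => suppF_le hne fun y hy => ?_).continuous
  have hyM : ‖y‖ ≤ M.toNNReal := (mem_closedBall_zero_iff.mp (hM hy)).trans M.le_coe_toNNReal
  calc ⟪p, y⟫ = ⟪q, y⟫ + ⟪p - q, y⟫ := by rw [inner_sub_left]; ring
    _ ≤ suppF q A + ‖p - q‖ * ‖y‖ := add_le_add (inner_le_suppF hA q hy) (real_inner_le_norm _ _)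
    _ ≤ suppF q A + M.toNNReal * dist p q := by
      rw [dist_eq_norm, mul_comm]; gcongr

lemma mem_of_forall_inner_le_suppF (hA : IsClosed A) (hconv : Convex ℝ A) (hne : A.Nonempty)
    {x : EuclideanSpace ℝ (Fin n)}
    (h : ∀ ν : EuclideanSpace ℝ (Fin n), ‖ν‖ = 1 → ⟪ν, x⟫ ≤ suppF ν A) : x ∈ A := by
  by_contra hx
  obtain ⟨f, u, hfA, hfx⟩ := geometric_hahn_banach_closed_point hconv hA hx
  set p := (InnerProductSpace.toDual ℝ (EuclideanSpace ℝ (Fin n))).symm f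
  have hp : ∀ y, ⟪p, y⟫ = f y := fun y => InnerProductSpace.toDual_symm_apply
  obtain ⟨b, hb⟩ := hne
  have hp0 : 0 < ‖p‖ := norm_pos_iff.mpr fun h0 => by
    have := (hfA b hb).trans hfx
    rw [← hp, ← hp, h0, inner_zero_left, inner_zero_left] at this
    exact this.false
  have hsupp : suppF (‖p‖⁻¹ • p) A ≤ ‖p‖⁻¹ * u :=
    suppF_le ⟨b, hb⟩ fun y hy => by
      rw [real_inner_smul_left, hp]; gcongr; exact (hfA y hy).le
  have hunit : ‖‖p‖⁻¹ • p‖ = 1 := by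
    rw [norm_smul, norm_inv, norm_norm, inv_mul_cancel₀ hp0.ne']
  have := (h _ hunit).trans hsupp
  rw [real_inner_smul_left, hp] at this
  exact (mul_lt_mul_of_pos_left hfx (inv_pos.mpr hp0)).not_ge this

lemma closedBall_subset_of_forall_inner_add_le_suppF (hA : IsClosed A) (hconv : Convex ℝ A)
    (hne : A.Nonempty) {c : EuclideanSpace ℝ (Fin n)} {R : ℝ}
    (h : ∀ ν : EuclideanSpace ℝ (Fin n), ‖ν‖ = 1 → ⟪ν, c⟫ + R ≤ suppF ν A) :
    closedBall c R ⊆ A := fun x hx =>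
  mem_of_forall_inner_le_suppF hA hconv hne fun ν hν => by
    have hx : ‖x - c‖ ≤ R := by rwa [mem_closedBall, dist_eq_norm] at hx
    calc ⟪ν, x⟫ = ⟪ν, c⟫ + ⟪ν, x - c⟫ := by rw [inner_sub_right]; ring
      _ ≤ ⟪ν, c⟫ + ‖ν‖ * ‖x - c‖ := by gcongr; exact real_inner_le_norm _ _
      _ ≤ suppF ν A := by rw [hν, one_mul]; linarith [h ν hν]

end SupportFunction

section InscribedBall

variable {n : ℕ} {A : Set (EuclideanSpace ℝ (Fin n))}

theorem exists_inner_nonneg_supporting_of_maximal_ball (hA : IsCompact A) (hconv : Convex ℝ A)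
    {a : EuclideanSpace ℝ (Fin n)} {r : ℝ} (ha : closedBall a r ⊆ A)
    (hmax : ∀ c R, closedBall c R ⊆ A → R ≤ r) (w : EuclideanSpace ℝ (Fin n)) :
    ∃ ν : EuclideanSpace ℝ (Fin n), ‖ν‖ = 1 ∧ 0 ≤ ⟪ν, w⟫ ∧ ∀ x ∈ A, ⟪ν, x⟫ ≤ ⟪ν, a⟫ + r := by
  have hr : 0 ≤ r := by
    by_contra! hr
    linarith [hmax a (r / 2) (by rw [closedBall_eq_empty.mpr (by linarith)]; exact empty_subset A)]
  have hne : A.Nonempty := ⟨a, ha (mem_closedBall_self hr)⟩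
  have hgap : ∀ ν : EuclideanSpace ℝ (Fin n), ‖ν‖ = 1 → ⟪ν, a⟫ + r ≤ suppF ν A := fun ν hν =>
    inner_add_smul_of_norm_eq_one hν a r ▸
      inner_le_suppF hA.isBounded ν (ha (add_smul_mem_closedBall a hν hr))
  by_contra! hcon
  have hpos : ∀ ν ∈ sphere (0 : EuclideanSpace ℝ (Fin n)) 1,
      0 < max (suppF ν A - ⟪ν, a⟫ - r) (-⟪ν, w⟫) := fun ν hν => by
    rw [mem_sphere_zero_iff_norm] at hν
    rcases lt_or_ge ⟪ν, w⟫ 0 with hw | hw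
    · exact lt_max_of_lt_right (neg_pos.mpr hw)
    · obtain ⟨x, hx, hlt⟩ := hcon ν hν hw
      exact lt_max_of_lt_left (by linarith [inner_le_suppF hA.isBounded ν hx])
  have hcont : Continuous fun ν => max (suppF ν A - ⟪ν, a⟫ - r) (-⟪ν, w⟫) := by
    have := continuous_suppF hA.isBounded hne
    fun_prop
  obtain ⟨m, hm, hmψ⟩ := (isCompact_sphere 0 1).exists_forall_le' hcont.continuousOn hpos
  set t := m / (‖w‖ + m)
  have ht : 0 < t := by positivity
  have hbig : closedBall (a + t • w) (r + t * m) ⊆ A :=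
    closedBall_subset_of_forall_inner_add_le_suppF hA.isClosed hconv hne fun ν hν => by
      have hνw : ⟪ν, w⟫ ≤ ‖w‖ := by simpa [hν] using real_inner_le_norm ν w
      have htw : t * (‖w‖ + m) = m := div_mul_cancel₀ _ (by positivity)
      rw [inner_add_right, real_inner_smul_right]
      rcases le_max_iff.mp (hmψ ν (mem_sphere_zero_iff_norm.mpr hν)) with hg | hg
      · nlinarith
      · nlinarith [hgap ν hν]
  linarith [hmax _ _ hbig, mul_pos ht hm]

end InscribedBall

section ModulusOfConvexity

variable {n : ℕ} {A : Set (EuclideanSpace ℝ (Fin n))}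

lemma modConv_le_of_forall_inner_le (hconv : Convex ℝ A) {x₁ x₂ : EuclideanSpace ℝ (Fin n)}
    (hx₁ : x₁ ∈ A) (hx₂ : x₂ ∈ A) {ν : EuclideanSpace ℝ (Fin n)} (hν : ‖ν‖ = 1) {β : ℝ}
    (hA : ∀ x ∈ A, ⟪ν, x⟫ ≤ β) :
    modConv A ‖x₁ - x₂‖ ≤ β - (⟪ν, x₁⟫ + ⟪ν, x₂⟫) / 2 := by
  have hm : ⟪ν, midpoint ℝ x₁ x₂⟫ = (⟪ν, x₁⟫ + ⟪ν, x₂⟫) / 2 := by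
    rw [midpoint_eq_smul_add, real_inner_smul_right, inner_add_right, invOf_eq_inv]; ring
  rw [← hm]
  refine Real.sSup_le (fun δ ⟨hδ, hball⟩ => ?_)
    (sub_nonneg.mpr (hA _ (hconv.midpoint_mem hx₁ hx₂)))
  have := hA _ (hball x₁ hx₁ x₂ hx₂ rfl (add_smul_mem_closedBall _ hν hδ))
  rw [inner_add_smul_of_norm_eq_one hν] at this
  linarith

lemma modConv_le_half_of_supporting (hconv : Convex ℝ A) {a x ν : EuclideanSpace ℝ (Fin n)}
    {r ε : ℝ} (hν : ‖ν‖ = 1) (hr : 0 ≤ r) (hA : ∀ y ∈ A, ⟪ν, y⟫ ≤ ⟪ν, a⟫ + r)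
    (hy : a + r • ν ∈ A) (hx : x ∈ A) (hνx : 0 ≤ ⟪ν, x - a⟫) (hε : 0 ≤ ε)
    (hεx : ε ≤ ‖x - a‖ - r) :
    modConv A ε ≤ r / 2 := by
  set y := a + r • ν
  set L := ‖x - y‖
  have hya : ‖y - a‖ ≤ r := mem_closedBall_iff_norm.mp (add_smul_mem_closedBall a hν hr)
  have hL : ε ≤ L := by linarith [norm_sub_le_norm_sub_add_norm_sub x y a]
  set t := ε / L
  have ht0 : 0 ≤ t := div_nonneg hε (norm_nonneg _)
  have ht1 : t ≤ 1 := div_le_one_of_le₀ hL (norm_nonneg _)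
  set x₂ := y + t • (x - y)
  have hchord : ‖y - x₂‖ = ε := by
    rw [sub_add_cancel_left, norm_neg, norm_smul, Real.norm_of_nonneg ht0]
    exact div_mul_cancel_of_imp fun h => le_antisymm (h ▸ hL) hε
  have hbound := modConv_le_of_forall_inner_le hconv hy (hconv.add_smul_sub_mem hy hx ⟨ht0, ht1⟩)
    hν hA
  rw [hchord] at hbound
  have hνy : ⟪ν, y⟫ = ⟪ν, a⟫ + r := inner_add_smul_of_norm_eq_one hν a r
  have hνx₂ : ⟪ν, x₂⟫ = ⟪ν, y⟫ + t * (⟪ν, x - a⟫ - r) := by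
    rw [inner_add_right, real_inner_smul_right, inner_sub_right, inner_sub_right, hνy]; ring
  rw [hνx₂, hνy] at hbound
  nlinarith [mul_nonneg ht0 hνx, mul_nonneg (sub_nonneg.mpr ht1) hr]

end ModulusOfConvexity

theorem modConv_le_of_maximal_inscribed_ball_general
    (n : ℕ) (A : Set (EuclideanSpace ℝ (Fin n)))
    (hA : IsCompact A) (hconv : Convex ℝ A)
    (r₀ d : ℝ) (a : EuclideanSpace ℝ (Fin n))
    (hr₀ : r₀ = sSup {r : ℝ | 0 ≤ r ∧ ∃ c : EuclideanSpace ℝ (Fin n),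
      Metric.closedBall c r ⊆ A})
    (ha : Metric.closedBall a r₀ ⊆ A)
    (hd : d = sSup ((fun x => ‖x - a‖) '' A))
    (h2 : 2 * r₀ < d) :
    modConv A (d - r₀) ≤ r₀ / 2 := by
  have hr0 : 0 ≤ r₀ := hr₀ ▸ Real.sSup_nonneg fun r hr => hr.1
  obtain ⟨xs, hxs, hdx⟩ : ∃ xs ∈ A, d = ‖xs - a‖ := by
    rcases A.eq_empty_or_nonempty with rfl | hne
    · rw [image_empty, Real.sSup_empty] at hd
      linarith
    · exact hd ▸ hA.exists_sSup_image_eq hne (by fun_prop)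
  have : Nontrivial (EuclideanSpace ℝ (Fin n)) :=
    ⟨xs, a, fun h => by rw [h, sub_self, norm_zero] at hdx; linarith⟩
  have hmax : ∀ c R, closedBall c R ⊆ A → R ≤ r₀ := fun c R hc => by
    rcases le_or_gt R 0 with hR | hR
    · linarith
    · exact hr₀ ▸ le_csSup (bddAbove_inscribed_radii hA.isBounded) ⟨hR.le, c, hc⟩
  obtain ⟨ν, hν, hνx, hνA⟩ :=
    exists_inner_nonneg_supporting_of_maximal_ball hA hconv ha hmax (xs - a)
  exact modConv_le_half_of_supporting hconv hν hr0 hνA (ha (add_smul_mem_closedBall a hν hr0))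
    hxs hνx (by linarith) (by linarith)

/-- Theorem 4.1: if the farthest distance `d` from the center of a maximal
inscribed ball exceeds `2r₀`, then `δ_A(d - r₀) ≤ r₀/2`. -/
theorem modConv_le_of_maximal_inscribed_ball
    (n : ℕ) (A : Set (EuclideanSpace ℝ (Fin n)))
    (hA : IsCompact A) (hconv : Convex ℝ A) (huc : UnifConvex A)
    (r₀ d : ℝ) (a : EuclideanSpace ℝ (Fin n))
    (hr₀ : r₀ = sSup {r : ℝ | 0 ≤ r ∧ ∃ c : EuclideanSpace ℝ (Fin n),
      Metric.closedBall c r ⊆ A})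
    (ha : Metric.closedBall a r₀ ⊆ A)
    (hd : d = sSup ((fun x => ‖x - a‖) '' A))
    (h2 : 2 * r₀ < d) :
    modConv A (d - r₀) ≤ r₀ / 2 :=
  modConv_le_of_maximal_inscribed_ball_general n A hA hconv r₀ d a hr₀ ha hd h2
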